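/- arXiv:2503.15939 — 2 statements merged into one kernel-verified Lean document; each statement's English description precedes it below -/
import Mathlib

section
/- Let $H_1 \xrightarrow{T} H_2 \xrightarrow{S} H_3$ be densely defined closed linear operators between Hilbert spaces with $S \circ T = 0$ on the domain of $T$ (i.e. $\mathrm{ran}(T) \subseteq \ker S$). Let $V \subseteq H_2$ be a closed subspace containing $\mathrm{ran}(T)$. Suppose there is a constant $C > 0$ such that $\|h\|_{H_2} \le C(\|T^*h\|_{H_1} + \|Sh\|_{H_3})$ for all $h \in D_{T^*} \cap D_S \cap V$. Then for every $v \in \ker S \cap V$ there exists $w \in D_T$ with $Tw = v$ and $\|w\|_{H_1} \le C\|v\|_{H_2}$. -/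
/-!
Put `W = V ⊓ ker S`. Since `T*` kills `Wᗮ ⊆ (ran T)ᗮ`, projecting `h ∈ dom T*` onto `W` does not
change `T*h`, so the estimate gives `|⟪v, h⟫| ≤ C‖v‖‖T*h‖`. Hence `T*h ↦ ⟪v, h⟫` is a functional
of norm `≤ C‖v‖` on `ran T*`; Hahn–Banach and Riesz represent it by some `w` with `‖w‖ ≤ C‖v‖`
and `⟪w, T*h⟫ = ⟪v, h⟫` for all `h`, and `T** = T` (the graph of a closed operator is its own
double orthogonal complement) turns this into `Tw = v`.
-/

open LinearPMap InnerProductSpace WithLp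
open scoped InnerProductSpace

theorem LinearMap.exists_comp_rangeRestrict_eq {R M N P : Type*} [Ring R]
    [AddCommGroup M] [Module R M] [AddCommGroup N] [Module R N] [AddCommGroup P] [Module R P]
    {A : M →ₗ[R] N} {ψ : M →ₗ[R] P} (h : LinearMap.ker A ≤ LinearMap.ker ψ) :
    ∃ f : LinearMap.range A →ₗ[R] P, f ∘ₗ A.rangeRestrict = ψ :=
  ⟨(LinearMap.ker A).liftQ ψ h ∘ₗ A.quotKerEquivRange.symm.toLinearMap, by
    ext m
    change (LinearMap.ker A).liftQ ψ h (A.quotKerEquivRange.symm ⟨A m, _⟩) = ψ m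
    rw [LinearMap.quotKerEquivRange_symm_apply_image]
    rfl⟩

section Riesz

variable {𝕜 E M : Type*} [RCLike 𝕜] [NormedAddCommGroup E] [InnerProductSpace 𝕜 E]
  [CompleteSpace E] [AddCommGroup M] [Module 𝕜 M]

theorem exists_inner_eq_of_norm_le_mul_norm (A : M →ₗ[𝕜] E) (ψ : M →ₗ[𝕜] 𝕜) {c : ℝ}
    (hc : 0 ≤ c) (hψ : ∀ m, ‖ψ m‖ ≤ c * ‖A m‖) :
    ∃ w : E, ‖w‖ ≤ c ∧ ∀ m, ⟪w, A m⟫_𝕜 = ψ m := by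
  have hker : LinearMap.ker A ≤ LinearMap.ker ψ := fun m hm => by
    simpa [LinearMap.mem_ker.mp hm] using hψ m
  obtain ⟨f, hf⟩ := LinearMap.exists_comp_rangeRestrict_eq hker
  have hf_apply (m : M) : f (A.rangeRestrict m) = ψ m := LinearMap.congr_fun hf m
  have hf_bound : ∀ y : LinearMap.range A, ‖f y‖ ≤ c * ‖y‖ := by
    rintro ⟨_, m, rfl⟩
    exact (hf_apply m).symm ▸ hψ m
  obtain ⟨g, hg, hg_norm⟩ := exists_extension_norm_eq _ (f.mkContinuous c hf_bound)
  refine ⟨(toDual 𝕜 E).symm g, ?_, fun m => ?_⟩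
  · rw [LinearIsometryEquiv.norm_map, hg_norm]
    exact LinearMap.mkContinuous_norm_le f hc hf_bound
  · rw [toDual_symm_apply]
    exact (hg (A.rangeRestrict m)).trans (hf_apply m)

end Riesz

namespace LinearPMap

section Kernel

variable {R E F : Type*} [CommRing R] [AddCommGroup E] [Module R E] [AddCommGroup F] [Module R F]

def ker (S : E →ₗ.[R] F) : Submodule R E :=
  S.graph.comap (LinearMap.inl R E F)

theorem mem_ker_iff (S : E →ₗ.[R] F) {x : E} :
    x ∈ S.ker ↔ ∃ hx : x ∈ S.domain, S ⟨x, hx⟩ = 0 :=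
  ⟨fun h => ⟨mem_domain_of_mem_graph h, ((image_iff _).mpr h).symm⟩,
    fun ⟨hx, h⟩ => (image_iff hx).mp h.symm⟩

theorem isClosed_ker [TopologicalSpace E] [TopologicalSpace F]
    {S : E →ₗ.[R] F} (hS : S.IsClosed) : _root_.IsClosed (S.ker : Set E) :=
  hS.preimage (continuous_id.prodMk continuous_const)

end Kernel

variable {𝕜 E F : Type*} [RCLike 𝕜] [NormedAddCommGroup E] [InnerProductSpace 𝕜 E]
  [NormedAddCommGroup F] [InnerProductSpace 𝕜 F] {T : E →ₗ.[𝕜] F}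

def graphLp (T : E →ₗ.[𝕜] F) : Submodule 𝕜 (WithLp 2 (E × F)) :=
  T.graph.comap (WithLp.linearEquiv 2 𝕜 (E × F)).toLinearMap

theorem isClosed_graphLp (hT : T.IsClosed) :
    _root_.IsClosed (T.graphLp : Set (WithLp 2 (E × F))) :=
  hT.preimage (prod_continuous_ofLp 2 E F)

variable [CompleteSpace E]

theorem exists_adjoint_eq_neg_of_mem_orthogonal_graphLp (hT : Dense (T.domain : Set E))
    {z : WithLp 2 (E × F)} (hz : z ∈ T.graphLpᗮ) :
    ∃ hz' : (ofLp z).2 ∈ T†.domain, T† ⟨(ofLp z).2, hz'⟩ = -(ofLp z).1 := by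
  have key (x : T.domain) : ⟪-(ofLp z).1, (x : E)⟫_𝕜 = ⟪(ofLp z).2, T x⟫_𝕜 := by
    have h0 := Submodule.inner_left_of_mem_orthogonal
      (show toLp 2 ((x : E), T x) ∈ T.graphLp from T.mem_graph x) hz
    rw [prod_inner_apply, ofLp_toLp] at h0
    rw [inner_neg_left]
    linear_combination -h0
  exact ⟨mem_adjoint_domain_of_exists _ ⟨_, key⟩, adjoint_apply_eq hT _ key⟩

theorem mem_graph_of_inner_adjoint_eq (hT : Dense (T.domain : Set E)) (hTc : T.IsClosed)
    [CompleteSpace F] {w : E} {v : F} (h : ∀ y : T†.domain, ⟪w, T† y⟫_𝕜 = ⟪v, (y : F)⟫_𝕜) :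
    (w, v) ∈ T.graph := by
  have : CompleteSpace T.graphLp := (isClosed_graphLp hTc).completeSpace_coe
  suffices toLp 2 (w, v) ∈ T.graphLpᗮᗮ by rwa [Submodule.orthogonal_orthogonal] at this
  refine (Submodule.mem_orthogonal _ _).mpr fun z hz => ?_
  obtain ⟨hz', hTz⟩ := exists_adjoint_eq_neg_of_mem_orthogonal_graphLp hT hz
  have hwv := congrArg (starRingEnd 𝕜) (h ⟨_, hz'⟩)
  rw [inner_conj_symm, inner_conj_symm, hTz, inner_neg_left, neg_eq_iff_eq_neg] at hwv
  rw [prod_inner_apply, ofLp_toLp, hwv, neg_add_cancel]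

theorem exists_adjoint_eq_zero_of_inner_apply_eq_zero (hT : Dense (T.domain : Set E)) {q : F}
    (hq : ∀ x : T.domain, ⟪q, T x⟫_𝕜 = 0) : ∃ hq' : q ∈ T†.domain, T† ⟨q, hq'⟩ = 0 := by
  have key (x : T.domain) : ⟪(0 : E), (x : E)⟫_𝕜 = ⟪q, T x⟫_𝕜 := by rw [inner_zero_left, hq]
  exact ⟨mem_adjoint_domain_of_exists _ ⟨0, key⟩, adjoint_apply_eq hT _ key⟩

theorem exists_adjoint_starProjection_eq (hT : Dense (T.domain : Set E)) (W : Submodule 𝕜 F)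
    [W.HasOrthogonalProjection] (hTW : ∀ x : T.domain, T x ∈ W) (y : T†.domain) :
    ∃ hp : W.starProjection y ∈ T†.domain, T† ⟨_, hp⟩ = T† y := by
  obtain ⟨hq, hTq⟩ := exists_adjoint_eq_zero_of_inner_apply_eq_zero hT fun x =>
    Submodule.inner_left_of_mem_orthogonal (hTW x) (W.sub_starProjection_mem_orthogonal y)
  have hp : W.starProjection y ∈ T†.domain := by
    simpa using sub_mem y.2 hq
  refine ⟨hp, ?_⟩
  have hsplit : (⟨_, hp⟩ : T†.domain) = y - ⟨_, hq⟩ := Subtype.ext (by simp)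
  rw [hsplit, LinearPMap.map_sub, hTq, sub_zero]

theorem exists_apply_eq_of_norm_le_mul_norm_adjoint [CompleteSpace F]
    (hT : Dense (T.domain : Set E)) (hTc : T.IsClosed) (W : Submodule 𝕜 F)
    (hW : _root_.IsClosed (W : Set F)) (hTW : ∀ x : T.domain, T x ∈ W) {C : ℝ} (hC : 0 ≤ C)
    (est : ∀ y : T†.domain, (y : F) ∈ W → ‖(y : F)‖ ≤ C * ‖T† y‖) {v : F} (hv : v ∈ W) :
    ∃ w : E, ∃ hw : w ∈ T.domain, T ⟨w, hw⟩ = v ∧ ‖w‖ ≤ C * ‖v‖ := by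
  have : CompleteSpace W := hW.completeSpace_coe
  have bound (y : T†.domain) : ‖⟪v, (y : F)⟫_𝕜‖ ≤ C * ‖v‖ * ‖T† y‖ := by
    obtain ⟨hp, hTp⟩ := exists_adjoint_starProjection_eq hT W hTW y
    calc ‖⟪v, (y : F)⟫_𝕜‖ = ‖⟪v, W.starProjection y⟫_𝕜‖ := by
          rw [← Submodule.inner_starProjection_left_eq_right,
            Submodule.starProjection_eq_self_iff.mpr hv]
      _ ≤ ‖v‖ * ‖W.starProjection y‖ := norm_inner_le_norm _ _
      _ ≤ ‖v‖ * (C * ‖T† y‖) := by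
          have hpW := est ⟨_, hp⟩ (W.starProjection_apply_mem y)
          rw [hTp] at hpW
          gcongr
      _ = C * ‖v‖ * ‖T† y‖ := by ring
  obtain ⟨w, hw_norm, hw⟩ := exists_inner_eq_of_norm_le_mul_norm T†.toFun
    (innerₛₗ 𝕜 v ∘ₗ T†.domain.subtype) (by positivity) bound
  have hg := mem_graph_of_inner_adjoint_eq hT hTc hw
  exact ⟨w, mem_domain_of_mem_graph hg, ((image_iff _).mpr hg).symm, hw_norm⟩

end LinearPMap

theorem stmt_13_general {H1 H2 H3 : Type*}
    [NormedAddCommGroup H1] [InnerProductSpace ℂ H1] [CompleteSpace H1]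
    [NormedAddCommGroup H2] [InnerProductSpace ℂ H2] [CompleteSpace H2]
    [NormedAddCommGroup H3] [InnerProductSpace ℂ H3]
    (T : H1 →ₗ.[ℂ] H2) (S : H2 →ₗ.[ℂ] H3)
    (hTdense : Dense (T.domain : Set H1))
    (hTclosed : T.IsClosed) (hSclosed : S.IsClosed)
    (hST : ∀ x : T.domain, ∃ h : T x ∈ S.domain, S ⟨T x, h⟩ = 0)
    (V : Submodule ℂ H2) (hVclosed : IsClosed (V : Set H2))
    (hTV : ∀ x : T.domain, T x ∈ V)
    (C : ℝ) (hC : 0 < C)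
    (est : ∀ h : H2, ∀ (h1 : h ∈ T.adjoint.domain) (h2 : h ∈ S.domain), h ∈ V →
      ‖h‖ ≤ C * (‖T.adjoint ⟨h, h1⟩‖ + ‖S ⟨h, h2⟩‖)) :
    ∀ v : H2, ∀ hv : v ∈ S.domain, S ⟨v, hv⟩ = 0 → v ∈ V →
      ∃ w : H1, ∃ hw : w ∈ T.domain, T ⟨w, hw⟩ = v ∧ ‖w‖ ≤ C * ‖v‖ := by
  intro v hv hSv hVv
  refine exists_apply_eq_of_norm_le_mul_norm_adjoint hTdense hTclosed (V ⊓ S.ker)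
    (hVclosed.inter (isClosed_ker hSclosed)) (fun x => ⟨hTV x, S.mem_ker_iff.mpr (hST x)⟩)
    hC.le ?_ ⟨hVv, S.mem_ker_iff.mpr ⟨hv, hSv⟩⟩
  rintro y ⟨hyV, hyS⟩
  obtain ⟨hyS, hSy⟩ := S.mem_ker_iff.mp hyS
  simpa [hSy] using est y y.2 hyS hyV

/-- Hörmander: Let `T : H₁ → H₂`, `S : H₂ → H₃` be densely defined
closed operators between Hilbert spaces with `ran T ⊆ ker S`, let `V ⊆ H₂` be a
closed subspace containing `ran T`, and suppose
`‖h‖ ≤ C(‖T*h‖ + ‖Sh‖)` for all `h ∈ D_{T*} ∩ D_S ∩ V`. Then for every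
`v ∈ ker S ∩ V` there is `w ∈ D_T` with `Tw = v` and `‖w‖ ≤ C‖v‖`. -/
theorem stmt_13 {H1 H2 H3 : Type*}
    [NormedAddCommGroup H1] [InnerProductSpace ℂ H1] [CompleteSpace H1]
    [NormedAddCommGroup H2] [InnerProductSpace ℂ H2] [CompleteSpace H2]
    [NormedAddCommGroup H3] [InnerProductSpace ℂ H3] [CompleteSpace H3]
    (T : H1 →ₗ.[ℂ] H2) (S : H2 →ₗ.[ℂ] H3)
    (hTdense : Dense (T.domain : Set H1)) (hSdense : Dense (S.domain : Set H2))
    (hTclosed : T.IsClosed) (hSclosed : S.IsClosed)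
    (hST : ∀ x : T.domain, ∃ h : T x ∈ S.domain, S ⟨T x, h⟩ = 0)
    (V : Submodule ℂ H2) (hVclosed : IsClosed (V : Set H2))
    (hTV : ∀ x : T.domain, T x ∈ V)
    (C : ℝ) (hC : 0 < C)
    (est : ∀ h : H2, ∀ (h1 : h ∈ T.adjoint.domain) (h2 : h ∈ S.domain), h ∈ V →
      ‖h‖ ≤ C * (‖T.adjoint ⟨h, h1⟩‖ + ‖S ⟨h, h2⟩‖)) :
    ∀ v : H2, ∀ hv : v ∈ S.domain, S ⟨v, hv⟩ = 0 → v ∈ V →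
      ∃ w : H1, ∃ hw : w ∈ T.domain, T ⟨w, hw⟩ = v ∧ ‖w‖ ≤ C * ‖v‖ :=
  stmt_13_general T S hTdense hTclosed hSclosed hST V hVclosed hTV C hC est
end

section
/- Let $H_1 \xrightarrow{T} H_2$ be a closed densely defined operator between Hilbert spaces, $V \subseteq H_2$ a closed subspace containing $\mathrm{ran}(T)$, and $S: D_S \subseteq H_2 \to H_3$ closed densely defined with $ST = 0$. If $\|h\| \le C(\|T^*h\| + \|Sh\|)$ for all $h \in D_{T^*} \cap D_S \cap V$, then for every $w \in \mathrm{ran}(T^*)$ there exists $v \in D_{T^*}$ with $T^*v = w$ and $\|v\|_{H_2} \le C\|w\|_{H_1}$. -/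
open scoped InnerProductSpace


/-- Hörmander, second conclusion: With `T : H₁ → H₂`, `S : H₂ → H₃`
densely defined closed operators, `ST = 0`, `V ⊆ H₂` a closed subspace containing
`ran T`, and the a priori estimate `‖h‖ ≤ C(‖T*h‖ + ‖Sh‖)` on `D_{T*} ∩ D_S ∩ V`,
for every `w ∈ ran T*` there exists `v ∈ D_{T*}` with `T*v = w` and
`‖v‖ ≤ C‖w‖`. -/
theorem stmt_14 {H1 H2 H3 : Type*}
    [NormedAddCommGroup H1] [InnerProductSpace ℂ H1] [CompleteSpace H1]
    [NormedAddCommGroup H2] [InnerProductSpace ℂ H2] [CompleteSpace H2]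
    [NormedAddCommGroup H3] [InnerProductSpace ℂ H3] [CompleteSpace H3]
    (T : H1 →ₗ.[ℂ] H2) (S : H2 →ₗ.[ℂ] H3)
    (hTdense : Dense (T.domain : Set H1)) (hSdense : Dense (S.domain : Set H2))
    (hTclosed : T.IsClosed) (hSclosed : S.IsClosed)
    (hST : ∀ x : T.domain, ∃ h : T x ∈ S.domain, S ⟨T x, h⟩ = 0)
    (V : Submodule ℂ H2) (hVclosed : IsClosed (V : Set H2))
    (hTV : ∀ x : T.domain, T x ∈ V)
    (C : ℝ) (hC : 0 < C)
    (est : ∀ h : H2, ∀ (h1 : h ∈ T.adjoint.domain) (h2 : h ∈ S.domain), h ∈ V →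
      ‖h‖ ≤ C * (‖T.adjoint ⟨h, h1⟩‖ + ‖S ⟨h, h2⟩‖)) :
    ∀ w : H1, (∃ u : T.adjoint.domain, T.adjoint u = w) →
      ∃ v : H2, ∃ hv : v ∈ T.adjoint.domain,
        T.adjoint ⟨v, hv⟩ = w ∧ ‖v‖ ≤ C * ‖w‖ := by
  rintro w ⟨u, hu⟩
  -- The closure of the range of T
  set R : Submodule ℂ H2 := LinearMap.range T.toFun with hR
  set M : Submodule ℂ H2 := R.topologicalClosure with hM
  haveI : CompleteSpace M := R.isClosed_topologicalClosure.completeSpace_coe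
  obtain ⟨y, hyM, z, hz, huyz⟩ := M.exists_add_mem_mem_orthogonal (u : H2)
  -- z is orthogonal to the range of T
  have hzR : ∀ x : T.domain, ⟪z, T x⟫_ℂ = 0 := by
    intro x
    exact inner_eq_zero_symm.mp
      (hz _ (Submodule.le_topologicalClosure R (LinearMap.mem_range_self T.toFun x)))
  -- hence z ∈ D_{T*} with T* z = 0
  have hzdom : z ∈ T.adjoint.domain :=
    LinearPMap.mem_adjoint_domain_of_exists z
      ⟨0, fun x => by rw [inner_zero_left, hzR x]⟩
  have hzadj : T.adjoint ⟨z, hzdom⟩ = 0 :=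
    LinearPMap.adjoint_apply_eq hTdense _ (fun x => by rw [inner_zero_left, hzR x])
  -- y ∈ D_{T*} with T* y = w
  have hy : y = (u : H2) - z := by rw [huyz]; abel
  have hydom : y ∈ T.adjoint.domain := hy ▸ sub_mem u.2 hzdom
  have hyadj : T.adjoint ⟨y, hydom⟩ = w := by
    have : (⟨y, hydom⟩ : T.adjoint.domain) = u - ⟨z, hzdom⟩ := by
      ext; simp [hy]
    rw [this, T.adjoint.map_sub, hu, hzadj, sub_zero]
  -- y ∈ closure (R : Set H2)
  have hyclR : y ∈ closure (R : Set H2) := by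
    rwa [← Submodule.topologicalClosure_coe, SetLike.mem_coe]
  -- y ∈ V
  have hyV : y ∈ V := by
    refine closure_minimal ?_ hVclosed hyclR
    rintro _ ⟨x, rfl⟩
    exact hTV x
  -- y ∈ ker S : the set K = {x | (x,0) ∈ graph S} is closed and contains R
  have hyK : (y, (0 : H3)) ∈ S.graph := by
    have hKclosed : IsClosed ((fun x : H2 => (x, (0 : H3))) ⁻¹' (S.graph : Set (H2 × H3))) :=
      hSclosed.preimage (continuous_id.prodMk continuous_const)
    have hRK : (R : Set H2) ⊆ (fun x : H2 => (x, (0 : H3))) ⁻¹' (S.graph : Set (H2 × H3)) := by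
      rintro _ ⟨x, rfl⟩
      obtain ⟨h, h0⟩ := hST x
      exact S.mem_graph_iff.2 ⟨⟨T x, h⟩, rfl, h0⟩
    exact closure_minimal hRK hKclosed hyclR
  obtain ⟨ys, hys1, hys2⟩ := S.mem_graph_iff.1 hyK
  have hys1' : (ys : H2) = y := hys1
  have hySdom : y ∈ S.domain := hys1' ▸ ys.2
  have hySzero : S ⟨y, hySdom⟩ = 0 := by
    have : (⟨y, hySdom⟩ : S.domain) = ys := by ext; exact hys1'.symm
    rw [this, hys2]
  -- apply the estimate
  refine ⟨y, hydom, hyadj, ?_⟩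
  have := est y hydom hySdom hyV
  rwa [hyadj, hySzero, norm_zero, add_zero] at this
end
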